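/- If the family Z^ε(T) = ε Z(T/ε) satisfies the weak large deviation principle in ℝ^d with rate functions I_T, then the quasipotential I(q,q') := inf_{T>0} I_T(q,q') admits the representation I(q,q') = inf_{T>0} T · I_1(q/T, q'/T) for all q,q' ∈ ℝ^d. -/

import Mathlib

open MeasureTheory Filter Set Metric
open scoped ENNReal Topology Pointwise

noncomputable section

namespace GreenLDP

/-- The state space `ℝ^d` with its Euclidean norm. -/
abbrev Sp (d : ℕ) := EuclideanSpace ℝ (Fin d)

/-- Path space: trajectories indexed by (real) time. -/
abbrev Path (d : ℕ) := ℝ → Sp d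

variable {d : ℕ}

/-- A path is right continuous with left limits at all nonnegative times. -/
def CadlagOn (φ : Path d) : Prop :=
  ∀ t : ℝ, 0 ≤ t → ContinuousWithinAt φ (Ici t) t ∧
    (0 < t → ∃ L : Sp d, Tendsto φ (𝓝[<] t) (𝓝 L))

/-- Basic setup: a time-homogeneous Markov process `Z` on an unbounded subset
`E ⊆ ℝ^d`, described through the family of its path-space laws `P z`
(the law of the process started at `z ∈ E`), whose sample paths are right
continuous with left limits. -/
structure MarkovSetup (d : ℕ) where
  /-- the (unbounded) state space `E ⊆ ℝ^d` -/
  E : Set (Sp d)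
  /-- `P z` is the law on path space of the process started at `z`;
  `P z S = ℙ_z(Z(·) ∈ S)` -/
  P : Sp d → Measure (Path d)
  prob : ∀ z, IsProbabilityMeasure (P z)
  unbounded : ¬ Bornology.IsBounded E
  start : ∀ z ∈ E, P z {ω | ω 0 = z} = 1
  stays : ∀ z ∈ E, ∀ᵐ ω ∂ P z, ∀ t : ℝ, 0 ≤ t → ω t ∈ E
  cadlag : ∀ z ∈ E, ∀ᵐ ω ∂ P z, CadlagOn ω
  /-- (time-homogeneous) Markov property: conditionally on the position at
  time `s`, the law of the shifted path is that of the process restarted there. -/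
  markov : ∀ z ∈ E, ∀ s : ℝ, 0 ≤ s → ∀ F : Path d → ℝ≥0∞, Measurable F →
    ∫⁻ ω, F (fun t => ω (s + t)) ∂ P z = ∫⁻ ω, ∫⁻ ω', F ω' ∂ P (ω s) ∂ P z

/-- Green's function `G(z,B) = ∫₀^∞ ℙ_z(Z(t) ∈ B) dt`. -/
def green (P : Sp d → Measure (Path d)) (z : Sp d) (B : Set (Sp d)) : ℝ≥0∞ :=
  ∫⁻ t in Ioi (0 : ℝ), P z {ω | ω t ∈ B}

/-- First exit time `τ_R = inf {t ≥ 0 : |Z(t)| ≥ R}` from the open ball of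
radius `R` (equal to `∞` if the process never exits). -/
def exitTime (ω : Path d) (R : ℝ) : ℝ≥0∞ :=
  ⨅ t ∈ {t : ℝ | 0 ≤ t ∧ R ≤ ‖ω t‖}, ENNReal.ofReal t

/-- Truncated Green's function `G_R(z,B) = ∫₀^∞ ℙ_z(Z(t) ∈ B, τ_R > t) dt`. -/
def greenTrunc (P : Sp d → Measure (Path d)) (R : ℝ) (z : Sp d) (B : Set (Sp d)) : ℝ≥0∞ :=
  ∫⁻ t in Ioi (0 : ℝ), P z {ω | ω t ∈ B ∧ ENNReal.ofReal t < exitTime ω R}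

/-- The scaled path `Z^ε(t) = ε Z(t/ε)`. -/
def scaledPath (ε : ℝ) (ω : Path d) : Path d := fun t => ε • ω (t / ε)

/-- The set `{z ∈ E : |εz − q| < δ}` of admissible starting points. -/
def nearScaled (E : Set (Sp d)) (ε : ℝ) (q : Sp d) (δ : ℝ) : Set (Sp d) :=
  {z ∈ E | ‖ε • z - q‖ < δ}

/-- The set `{z ∈ E : |z − nq| < δn}` of admissible starting points. -/
def nearE (E : Set (Sp d)) (q : Sp d) (n δ : ℝ) : Set (Sp d) :=
  {z ∈ E | ‖z - n • q‖ < δ * n}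

/-- Large deviation lower bound for the scaled variables `Z^ε(T) = εZ(T/ε)` over
open sets:  `lim_{δ→0} liminf_{ε→0} ε log inf_{z∈E,|εz−q|<δ} ℙ_z(Z^ε(T) ∈ O)
≥ −inf_{q'∈O} I(q,q')`.  (Since the inner quantity is monotone in `δ`, the limit
as `δ → 0⁺` is the supremum over `δ > 0`.) -/
def LDPLower (E : Set (Sp d)) (P : Sp d → Measure (Path d)) (T : ℝ)
    (I : Sp d → Sp d → EReal) : Prop :=
  ∀ (q : Sp d) (O : Set (Sp d)), IsOpen O →
    -(⨅ q' ∈ O, I q q') ≤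
      ⨆ δ : {δ : ℝ // 0 < δ},
        liminf (fun ε : ℝ =>
          (ε : EReal) * ENNReal.log
            (⨅ z ∈ nearScaled E ε q δ.1, P z {ω | scaledPath ε ω T ∈ O}))
          (𝓝[>] (0 : ℝ))

/-- Large deviation upper bound for the scaled variables `Z^ε(T) = εZ(T/ε)` over
compact sets:  `lim_{δ→0} limsup_{ε→0} ε log sup_{z∈E,|εz−q|<δ} ℙ_z(Z^ε(T) ∈ V)
≤ −inf_{q'∈V} I(q,q')`. -/
def LDPUpperCompact (E : Set (Sp d)) (P : Sp d → Measure (Path d)) (T : ℝ)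
    (I : Sp d → Sp d → EReal) : Prop :=
  ∀ (q : Sp d) (V : Set (Sp d)), IsCompact V →
    (⨅ δ : {δ : ℝ // 0 < δ},
      limsup (fun ε : ℝ =>
        (ε : EReal) * ENNReal.log
          (⨆ z ∈ nearScaled E ε q δ.1, P z {ω | scaledPath ε ω T ∈ V}))
        (𝓝[>] (0 : ℝ)))
      ≤ -(⨅ q' ∈ V, I q q')

/-- Large deviation upper bound over closed sets (for the full LDP). -/
def LDPUpperClosed (E : Set (Sp d)) (P : Sp d → Measure (Path d)) (T : ℝ)
    (I : Sp d → Sp d → EReal) : Prop :=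
  ∀ (q : Sp d) (V : Set (Sp d)), IsClosed V →
    (⨅ δ : {δ : ℝ // 0 < δ},
      limsup (fun ε : ℝ =>
        (ε : EReal) * ENNReal.log
          (⨆ z ∈ nearScaled E ε q δ.1, P z {ω | scaledPath ε ω T ∈ V}))
        (𝓝[>] (0 : ℝ)))
      ≤ -(⨅ q' ∈ V, I q q')

/-- The weak large deviation principle in `ℝ^d` for `Z^ε(T)` with a lower
semicontinuous rate function `I_T : ℝ^d × ℝ^d → [0,∞)`. -/
def WeakLDP (E : Set (Sp d)) (P : Sp d → Measure (Path d)) (T : ℝ)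
    (I : Sp d → Sp d → ℝ) : Prop :=
  LowerSemicontinuous (fun p : Sp d × Sp d => I p.1 p.2) ∧
  (∀ q q' : Sp d, 0 ≤ I q q') ∧
  LDPLower E P T (fun q q' => ((I q q' : ℝ) : EReal)) ∧
  LDPUpperCompact E P T (fun q q' => ((I q q' : ℝ) : EReal))

/-- Hypothesis (H1): for every `T > 0` the scaled variables `Z^ε(T)` satisfy the
weak large deviation principle with rate function `I_T`. -/
def H1 (E : Set (Sp d)) (P : Sp d → Measure (Path d))
    (I : ℝ → Sp d → Sp d → ℝ) : Prop :=
  ∀ T : ℝ, 0 < T → WeakLDP E P T (I T)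

/-- The jump generating function
`φ̂(a) = sup_{z∈E} sup_{t∈[0,1]} 𝔼_z exp(a·(Z(t)−z))` of hypothesis (H2). -/
def mgf (E : Set (Sp d)) (P : Sp d → Measure (Path d)) (a : Sp d) : ℝ≥0∞ :=
  ⨆ z ∈ E, ⨆ t ∈ Icc (0:ℝ) 1,
    ∫⁻ ω, ENNReal.ofReal (Real.exp ((inner ℝ a (ω t - z) : ℝ))) ∂ P z

/-- Hypothesis (H2): `φ̂(a) < ∞` for every `a ∈ ℝ^d`. -/
def H2 (E : Set (Sp d)) (P : Sp d → Measure (Path d)) : Prop :=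
  ∀ a : Sp d, mgf E P a < ⊤

/-- Hypothesis (H3), communication condition with constant `θ > 0` : there is a
positive function `σ` on `E` with `σ(z)/|z| → 0` as `|z| → ∞` such that for all
`z, z' ∈ E` the probability, starting from `z`, of ever hitting the open ball
`B(z', σ(z'))` is at least `exp(−θ|z'−z|)`. -/
def H3 (E : Set (Sp d)) (P : Sp d → Measure (Path d)) (θ : ℝ) : Prop :=
  0 < θ ∧ ∃ σ : Sp d → ℝ, (∀ z ∈ E, 0 < σ z) ∧
    (∀ η : ℝ, 0 < η → ∃ M : ℝ, ∀ z ∈ E, M ≤ ‖z‖ → σ z < η * ‖z‖) ∧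
    ∀ z ∈ E, ∀ z' ∈ E,
      ENNReal.ofReal (Real.exp (-θ * ‖z' - z‖)) ≤
        P z {ω | ∃ t : ℝ, 0 ≤ t ∧ ω t ∈ ball z' (σ z')}

/-- The set `𝓡` of all possible limits `lim_{ε→0} ε z_ε` with `z_ε ∈ E`. -/
def RSet (E : Set (Sp d)) : Set (Sp d) :=
  {q | ∃ zf : ℝ → Sp d, (∀ ε : ℝ, zf ε ∈ E) ∧
    Tendsto (fun ε : ℝ => ε • zf ε) (𝓝[>] (0:ℝ)) (𝓝 q)}

/-- The quasipotential `I(q,q') = inf_{T>0} I_T(q,q')`. -/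
def quasipot (I : ℝ → Sp d → Sp d → ℝ) (q q' : Sp d) : ℝ :=
  ⨅ T : {T : ℝ // 0 < T}, I T.1 q q'

-- `Î(q,q') = I(q,q')` for `q ≠ q'` and `Î(q,q) = 0`.
open Classical in
def quasipotHat (I : ℝ → Sp d → Sp d → ℝ) (q q' : Sp d) : ℝ :=
  if q = q' then 0 else quasipot I q q'

/-- The Skorohod distance on `D([0,T],ℝ^d)` :
`d(φ,ψ) = inf_λ max(sup_{t∈[0,T]}|λ(t)−t|, sup_{t∈[0,T]}|φ(λ(t))−ψ(t)|)`,
the infimum being over increasing bijections `λ` of `[0,T]`. -/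
def skorohodDist (T : ℝ) (φ ψ : Path d) : ℝ :=
  sInf {r : ℝ | 0 ≤ r ∧ ∃ lam : ℝ → ℝ, StrictMonoOn lam (Icc 0 T) ∧
    lam '' Icc 0 T = Icc 0 T ∧
    ∀ t ∈ Icc 0 T, |lam t - t| ≤ r ∧ ‖φ (lam t) - ψ t‖ ≤ r}

/-- The Skorohod topology on paths over the time interval `[0,T]`, generated by
the balls of the Skorohod distance. -/
def skorohodTop (d : ℕ) (T : ℝ) : TopologicalSpace (Path d) :=
  TopologicalSpace.generateFrom
    {s | ∃ (φ : Path d) (r : ℝ), 0 < r ∧ s = {ψ | skorohodDist T φ ψ < r}}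

/-- A good rate function on `D([0,T],ℝ^d)` : for every `c ≥ 0` and every compact
`V ⊆ ℝ^d` the set `{φ : φ(0) ∈ V, I_{[0,T]}(φ) ≤ c}` is compact for the
Skorohod topology. -/
def GoodRate (T : ℝ) (J : Path d → ℝ≥0∞) : Prop :=
  ∀ c : ℝ, 0 ≤ c → ∀ V : Set (Sp d), IsCompact V →
    @IsCompact _ (skorohodTop d T) {φ : Path d | φ 0 ∈ V ∧ J φ ≤ ENNReal.ofReal c}

/-- Sample path large deviation lower bound on `D([0,T],ℝ^d)`. -/
def SPLDLower (E : Set (Sp d)) (P : Sp d → Measure (Path d)) (T : ℝ)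
    (J : Path d → ℝ≥0∞) : Prop :=
  ∀ (z : Sp d) (𝓞 : Set (Path d)), @IsOpen _ (skorohodTop d T) 𝓞 →
    -(⨅ φ ∈ {φ ∈ 𝓞 | φ 0 = z}, (J φ : EReal)) ≤
      ⨆ δ : {δ : ℝ // 0 < δ},
        liminf (fun ε : ℝ =>
          (ε : EReal) * ENNReal.log
            (⨅ z' ∈ nearScaled E ε z δ.1, P z' {ω | scaledPath ε ω ∈ 𝓞}))
          (𝓝[>] (0 : ℝ))

/-- Sample path large deviation upper bound on `D([0,T],ℝ^d)`. -/
def SPLDUpper (E : Set (Sp d)) (P : Sp d → Measure (Path d)) (T : ℝ)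
    (J : Path d → ℝ≥0∞) : Prop :=
  ∀ (z : Sp d) (F : Set (Path d)), @IsClosed _ (skorohodTop d T) F →
    (⨅ δ : {δ : ℝ // 0 < δ},
      limsup (fun ε : ℝ =>
        (ε : EReal) * ENNReal.log
          (⨆ z' ∈ nearScaled E ε z δ.1, P z' {ω | scaledPath ε ω ∈ F}))
        (𝓝[>] (0 : ℝ)))
      ≤ -(⨅ φ ∈ {φ ∈ F | φ 0 = z}, (J φ : EReal))

/-- The sample path large deviation principle on `D([0,T],ℝ^d)` with a good rate
function `J = I_{[0,T]}`. -/
def SPLD (E : Set (Sp d)) (P : Sp d → Measure (Path d)) (T : ℝ)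
    (J : Path d → ℝ≥0∞) : Prop :=
  GoodRate T J ∧ SPLDLower E P T J ∧ SPLDUpper E P T J

/-- Hypothesis (H1'): for every `T > 0` the scaled processes satisfy the sample
path large deviation principle with good rate function `I_{[0,T]} = Ipath T`,
and `I_T(q,q')` is the infimum of `I_{[0,T]}(φ)` over paths with `φ(0) = q`,
`φ(T) = q'`. -/
def H1' (E : Set (Sp d)) (P : Sp d → Measure (Path d))
    (Ipath : ℝ → Path d → ℝ≥0∞) (I : ℝ → Sp d → Sp d → ℝ) : Prop :=
  ∀ T : ℝ, 0 < T → SPLD E P T (Ipath T) ∧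
    ∀ q q' : Sp d,
      (ENNReal.ofReal (I T q q') : ℝ≥0∞) =
        ⨅ φ ∈ {φ : Path d | φ 0 = q ∧ φ T = q'}, Ipath T φ

/-- `lim_{δ→0} liminf_{n→∞} (1/n) log inf_{z∈E,|z−nq|<δn} G(z, nB)`
(the limit in `δ` being a supremum, by monotonicity). -/
def greenLiminf (E : Set (Sp d)) (P : Sp d → Measure (Path d))
    (q : Sp d) (B : Set (Sp d)) : EReal :=
  ⨆ δ : {δ : ℝ // 0 < δ},
    liminf (fun n : ℕ =>
      ((((n : ℝ)⁻¹ : ℝ)) : EReal) * ENNReal.log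
        (⨅ z ∈ nearE E q n δ.1, green P z ((n : ℝ) • B))) atTop

/-- `lim_{δ→0} limsup_{n→∞} (1/n) log sup_{z∈E,|z−nq|<δn} G(z, nB)`
(the limit in `δ` being an infimum, by monotonicity). -/
def greenLimsup (E : Set (Sp d)) (P : Sp d → Measure (Path d))
    (q : Sp d) (B : Set (Sp d)) : EReal :=
  ⨅ δ : {δ : ℝ // 0 < δ},
    limsup (fun n : ℕ =>
      ((((n : ℝ)⁻¹ : ℝ)) : EReal) * ENNReal.log
        (⨆ z ∈ nearE E q n δ.1, green P z ((n : ℝ) • B))) atTop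

end GreenLDP

/-!
Substituting `ε = Tη` gives `Z^ε(T) = T • Z^η(1)`, so the weak LDP at time `1` with rate `I₁`
rescales into a weak LDP at time `T` with rate `(q, q') ↦ T * I₁(q/T, q'/T)`. Rate functions of a
weak LDP are unique: the lower bound on a ball is at most the upper bound on the closed ball, and
lower semicontinuity lets the radius shrink to `0`. Hence `I_T(q, q') = T * I₁(q/T, q'/T)`, and the
representation follows by taking the infimum over `T`. Uniqueness needs the sets of starting
points `{z ∈ E : |εz − q| < δ}` to be eventually nonempty; otherwise the infimum over them is the
junk value `⊤`. A finite rate in the lower bound gives positive probability of landing near `q`,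
and since the process stays in `E` this produces such points.
-/

def EReal.mulPosOrderIso (c : ℝ) (hc : 0 < c) : EReal ≃o EReal where
  toFun x := c * x
  invFun x := (c⁻¹ : ℝ) * x
  left_inv x := by
    dsimp only
    rw [← mul_assoc, ← EReal.coe_mul, inv_mul_cancel₀ hc.ne', EReal.coe_one, one_mul]
  right_inv x := by
    dsimp only
    rw [← mul_assoc, ← EReal.coe_mul, mul_inv_cancel₀ hc.ne', EReal.coe_one, one_mul]
  map_rel_iff' {x y} := by
    refine ⟨fun h => ?_, fun h => mul_le_mul_of_nonneg_left h (EReal.coe_nonneg.2 hc.le)⟩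
    have := mul_le_mul_of_nonneg_left h (EReal.coe_nonneg.2 (inv_pos.2 hc).le)
    simpa [← mul_assoc, ← EReal.coe_mul, inv_mul_cancel₀ hc.ne'] using this

@[simp] lemma EReal.mulPosOrderIso_apply (c : ℝ) (hc : 0 < c) (x : EReal) :
    mulPosOrderIso c hc x = c * x := rfl

lemma map_mul_left_nhdsGT_zero {c : ℝ} (hc : 0 < c) :
    map (c * ·) (𝓝[>] (0 : ℝ)) = 𝓝[>] 0 := by
  conv_lhs => rw [← comap_mulLeft_nhdsGT_zero hc]
  exact map_comap_of_surjective (mul_left_surjective₀ hc.ne') _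

lemma surjective_subtype_pos_div {c : ℝ} (hc : 0 < c) :
    Function.Surjective fun δ : {δ : ℝ // 0 < δ} =>
      (⟨δ.1 / c, div_pos δ.2 hc⟩ : {δ : ℝ // 0 < δ}) :=
  fun δ => ⟨⟨c * δ.1, mul_pos hc δ.2⟩, Subtype.ext (mul_div_cancel_left₀ _ hc.ne')⟩

lemma iSup_liminf_nhdsGT_rescale {T : ℝ} (hT : 0 < T) {f g : ℝ → ℝ → EReal}
    (hfg : ∀ δ η, f δ (T * η) = T * g (δ / T) η) :
    ⨆ δ : {δ : ℝ // 0 < δ}, liminf (f δ.1) (𝓝[>] 0) =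
      T * ⨆ δ : {δ : ℝ // 0 < δ}, liminf (g δ.1) (𝓝[>] 0) := by
  have hlim (δ : ℝ) : liminf (f δ) (𝓝[>] 0) = T * liminf (g (δ / T)) (𝓝[>] 0) := by
    conv_lhs => rw [← map_mul_left_nhdsGT_zero hT, ← liminf_comp]
    simp only [Function.comp_def, hfg]
    exact ((EReal.mulPosOrderIso T hT).liminf_apply).symm
  simp only [hlim]
  rw [← (surjective_subtype_pos_div hT).iSup_comp fun δ => liminf (g δ.1) (𝓝[>] 0),
    ← EReal.mulPosOrderIso_apply T hT, OrderIso.map_iSup]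
  rfl

lemma iInf_limsup_nhdsGT_rescale {T : ℝ} (hT : 0 < T) {f g : ℝ → ℝ → EReal}
    (hfg : ∀ δ η, f δ (T * η) = T * g (δ / T) η) :
    ⨅ δ : {δ : ℝ // 0 < δ}, limsup (f δ.1) (𝓝[>] 0) =
      T * ⨅ δ : {δ : ℝ // 0 < δ}, limsup (g δ.1) (𝓝[>] 0) := by
  have hlim (δ : ℝ) : limsup (f δ) (𝓝[>] 0) = T * limsup (g (δ / T)) (𝓝[>] 0) := by
    conv_lhs => rw [← map_mul_left_nhdsGT_zero hT, ← limsup_comp]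
    simp only [Function.comp_def, hfg]
    exact ((EReal.mulPosOrderIso T hT).limsup_apply).symm
  simp only [hlim]
  rw [← (surjective_subtype_pos_div hT).iInf_comp fun δ => limsup (g δ.1) (𝓝[>] 0),
    ← EReal.mulPosOrderIso_apply T hT, OrderIso.map_iInf]
  rfl

lemma LowerSemicontinuousAt.le_of_forall_biInf_closedBall_le {X : Type*} [PseudoMetricSpace X]
    {f : X → ℝ} {x : X} {a : ℝ} (hf : LowerSemicontinuousAt f x)
    (h : ∀ r : ℝ, 0 < r → ⨅ p ∈ closedBall x r, (f p : EReal) ≤ a) : f x ≤ a := by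
  by_contra! hlt
  obtain ⟨c, hac, hcf⟩ := exists_between hlt
  obtain ⟨r, hr, hball⟩ := Metric.eventually_nhds_iff.1 (hf c hcf)
  have hc : (c : EReal) ≤ ⨅ p ∈ closedBall x (r / 2), (f p : EReal) :=
    le_iInf₂ fun p hp => EReal.coe_le_coe_iff.2
      (hball ((mem_closedBall.1 hp).trans_lt (half_lt_self hr))).le
  exact hac.not_ge (EReal.coe_le_coe_iff.1 (hc.trans (h _ (half_pos hr))))

namespace GreenLDP

variable {d : ℕ}

def scaledLogInfProb (E : Set (Sp d)) (P : Sp d → Measure (Path d)) (T : ℝ) (q : Sp d)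
    (O : Set (Sp d)) (δ ε : ℝ) : EReal :=
  (ε : EReal) * ENNReal.log (⨅ z ∈ nearScaled E ε q δ, P z {ω | scaledPath ε ω T ∈ O})

def scaledLogSupProb (E : Set (Sp d)) (P : Sp d → Measure (Path d)) (T : ℝ) (q : Sp d)
    (V : Set (Sp d)) (δ ε : ℝ) : EReal :=
  (ε : EReal) * ENNReal.log (⨆ z ∈ nearScaled E ε q δ, P z {ω | scaledPath ε ω T ∈ V})

def ldpLowerLim (E : Set (Sp d)) (P : Sp d → Measure (Path d)) (T : ℝ) (q : Sp d)
    (O : Set (Sp d)) : EReal :=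
  ⨆ δ : {δ : ℝ // 0 < δ}, liminf (scaledLogInfProb E P T q O δ.1) (𝓝[>] 0)

def ldpUpperLim (E : Set (Sp d)) (P : Sp d → Measure (Path d)) (T : ℝ) (q : Sp d)
    (V : Set (Sp d)) : EReal :=
  ⨅ δ : {δ : ℝ // 0 < δ}, limsup (scaledLogSupProb E P T q V δ.1) (𝓝[>] 0)

lemma nearScaled_mul (E : Set (Sp d)) {T : ℝ} (hT : 0 < T) (η δ : ℝ) (q : Sp d) :
    nearScaled E (T * η) q δ = nearScaled E η (T⁻¹ • q) (δ / T) := by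
  ext z
  have hsub : (T * η) • z - q = T • (η • z - T⁻¹ • q) := by
    rw [smul_sub, smul_smul, smul_inv_smul₀ hT.ne']
  rw [nearScaled, nearScaled, mem_sep_iff, mem_sep_iff, hsub, norm_smul, Real.norm_eq_abs,
    abs_of_pos hT, lt_div_iff₀ hT, mul_comm]

lemma scaledPath_mul_apply_mem_iff {T : ℝ} (hT : 0 < T) (η : ℝ) (ω : Path d) (O : Set (Sp d)) :
    scaledPath (T * η) ω T ∈ O ↔ scaledPath η ω 1 ∈ T⁻¹ • O := by
  have hdiv : T / (T * η) = 1 / η := by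
    rw [div_mul_eq_div_div, div_self hT.ne']
  rw [scaledPath, scaledPath, hdiv, ← smul_smul,
    mem_smul_set_iff_inv_smul_mem₀ (inv_ne_zero hT.ne'), inv_inv]

lemma ldpLowerLim_rescale (E : Set (Sp d)) (P : Sp d → Measure (Path d)) {T : ℝ} (hT : 0 < T)
    (q : Sp d) (O : Set (Sp d)) :
    ldpLowerLim E P T q O = T * ldpLowerLim E P 1 (T⁻¹ • q) (T⁻¹ • O) :=
  iSup_liminf_nhdsGT_rescale hT fun δ η => by
    simp only [scaledLogInfProb, nearScaled_mul E hT, scaledPath_mul_apply_mem_iff hT,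
      EReal.coe_mul, mul_assoc]

lemma ldpUpperLim_rescale (E : Set (Sp d)) (P : Sp d → Measure (Path d)) {T : ℝ} (hT : 0 < T)
    (q : Sp d) (V : Set (Sp d)) :
    ldpUpperLim E P T q V = T * ldpUpperLim E P 1 (T⁻¹ • q) (T⁻¹ • V) :=
  iInf_limsup_nhdsGT_rescale hT fun δ η => by
    simp only [scaledLogSupProb, nearScaled_mul E hT, scaledPath_mul_apply_mem_iff hT,
      EReal.coe_mul, mul_assoc]

lemma biInf_coe_mul_comp_inv_smul (J : Sp d → ℝ) {T : ℝ} (hT : 0 < T) (O : Set (Sp d)) :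
    ⨅ q' ∈ O, ((T * J (T⁻¹ • q') : ℝ) : EReal) = T * ⨅ p ∈ T⁻¹ • O, (J p : EReal) := by
  rw [← image_smul, iInf_image, ← EReal.mulPosOrderIso_apply T hT, OrderIso.map_iInf₂]
  simp only [EReal.mulPosOrderIso_apply, EReal.coe_mul]

lemma WeakLDP.rescale {E : Set (Sp d)} {P : Sp d → Measure (Path d)} {I₁ : Sp d → Sp d → ℝ}
    (h₁ : WeakLDP E P 1 I₁) {T : ℝ} (hT : 0 < T) :
    WeakLDP E P T (fun a b => T * I₁ (T⁻¹ • a) (T⁻¹ • b)) := by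
  obtain ⟨hlsc, hnonneg, hlow, hup⟩ := h₁
  have hT' : (0 : EReal) ≤ T := EReal.coe_nonneg.2 hT.le
  refine ⟨?_, fun a b => mul_nonneg hT.le (hnonneg _ _), fun q O hO => ?_, fun q V hV => ?_⟩
  · exact (continuous_const_mul T).comp_lowerSemicontinuous
      (hlsc.comp ((continuous_fst.const_smul T⁻¹).prodMk (continuous_snd.const_smul T⁻¹)))
      (monotone_mul_left_of_nonneg hT.le)
  · change _ ≤ ldpLowerLim E P T q O
    rw [ldpLowerLim_rescale E P hT, biInf_coe_mul_comp_inv_smul _ hT, ← mul_neg]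
    exact mul_le_mul_of_nonneg_left (hlow _ _ (hO.smul₀ (inv_ne_zero hT.ne'))) hT'
  · change ldpUpperLim E P T q V ≤ _
    rw [ldpUpperLim_rescale E P hT, biInf_coe_mul_comp_inv_smul _ hT, ← mul_neg]
    exact mul_le_mul_of_nonneg_left (hup _ _ (hV.smul _)) hT'

lemma ldpLowerLim_le_ldpUpperLim {E : Set (Sp d)} {P : Sp d → Measure (Path d)} {T : ℝ}
    {q : Sp d} {O V : Set (Sp d)}
    (hne : ∀ δ : ℝ, 0 < δ → ∀ᶠ ε in 𝓝[>] (0 : ℝ), (nearScaled E ε q δ).Nonempty)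
    (hOV : O ⊆ V) : ldpLowerLim E P T q O ≤ ldpUpperLim E P T q V := by
  refine iSup_le fun δ₁ => le_iInf fun δ₂ => (liminf_le_liminf ?_).trans liminf_le_limsup
  filter_upwards [hne _ (lt_min δ₁.2 δ₂.2), self_mem_nhdsWithin] with ε ⟨z, hzE, hz⟩ hε
  have hinf_le_sup : (⨅ z ∈ nearScaled E ε q δ₁.1, P z {ω | scaledPath ε ω T ∈ O}) ≤
      ⨆ z ∈ nearScaled E ε q δ₂.1, P z {ω | scaledPath ε ω T ∈ V} :=
    calc _ ≤ P z {ω | scaledPath ε ω T ∈ O} := iInf₂_le z ⟨hzE, hz.trans_le (min_le_left _ _)⟩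
      _ ≤ P z {ω | scaledPath ε ω T ∈ V} := measure_mono fun ω hω => hOV hω
      _ ≤ _ := le_iSup₂ (f := fun z (_ : z ∈ nearScaled E ε q δ₂.1) =>
          P z {ω | scaledPath ε ω T ∈ V}) z ⟨hzE, hz.trans_le (min_le_right _ _)⟩
  exact mul_le_mul_of_nonneg_left (ENNReal.log_monotone hinf_le_sup)
    (EReal.coe_nonneg.2 (le_of_lt hε))

lemma le_of_ldpUpperCompact_of_ldpLower {E : Set (Sp d)} {P : Sp d → Measure (Path d)} {T : ℝ}
    {J J' : Sp d → Sp d → ℝ} (hJ : LowerSemicontinuous fun p : Sp d × Sp d => J p.1 p.2)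
    (hup : LDPUpperCompact E P T fun q q' => (J q q' : EReal))
    (hlow : LDPLower E P T fun q q' => (J' q q' : EReal)) {q : Sp d}
    (hne : ∀ δ : ℝ, 0 < δ → ∀ᶠ ε in 𝓝[>] (0 : ℝ), (nearScaled E ε q δ).Nonempty) (q' : Sp d) :
    J q q' ≤ J' q q' := by
  refine LowerSemicontinuousAt.le_of_forall_biInf_closedBall_le
    ((hJ.comp (Continuous.prodMk_right q)).lowerSemicontinuousAt q') fun r hr => ?_
  have hbounds : -(⨅ p ∈ ball q' r, (J' q p : EReal)) ≤ -(⨅ p ∈ closedBall q' r, (J q p : EReal)) :=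
    (hlow q _ isOpen_ball).trans <| (ldpLowerLim_le_ldpUpperLim hne ball_subset_closedBall).trans
      (hup q _ (isCompact_closedBall _ _))
  exact (EReal.neg_le_neg_iff.1 hbounds).trans (iInf₂_le q' (mem_ball_self hr))

lemma eventually_nearScaled_nonempty {E : Set (Sp d)} {P : Sp d → Measure (Path d)} {T : ℝ}
    {J : Sp d → Sp d → ℝ} (hT : 0 ≤ T) (hE : E.Nonempty)
    (hstays : ∀ z ∈ E, ∀ᵐ ω ∂P z, ∀ t : ℝ, 0 ≤ t → ω t ∈ E)
    (hlow : LDPLower E P T fun q q' => (J q q' : EReal)) (q : Sp d) {δ : ℝ} (hδ : 0 < δ) :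
    ∀ᶠ ε in 𝓝[>] (0 : ℝ), (nearScaled E ε q δ).Nonempty := by
  obtain ⟨z₀, hz₀⟩ := hE
  have hfinite : ⊥ < ldpLowerLim E P T 0 (ball q δ) :=
    calc ⊥ < ((-J 0 q : ℝ) : EReal) := EReal.bot_lt_coe _
      _ ≤ -(⨅ q' ∈ ball q δ, (J 0 q' : EReal)) := by
          rw [EReal.coe_neg]
          exact EReal.neg_le_neg_iff.2 (iInf₂_le q (mem_ball_self hδ))
      _ ≤ _ := hlow 0 _ isOpen_ball
  obtain ⟨δ', hδ'⟩ := lt_iSup_iff.1 hfinite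
  have hstart : ∀ᶠ ε in 𝓝[>] (0 : ℝ), z₀ ∈ nearScaled E ε 0 δ'.1 := by
    have hlim : Tendsto (fun ε : ℝ => ε • z₀) (𝓝[>] 0) (𝓝 0) := by
      simpa using (tendsto_nhdsWithin_of_tendsto_nhds (tendsto_id (x := 𝓝 (0 : ℝ)))).smul_const z₀
    filter_upwards [hlim (ball_mem_nhds 0 δ'.2)] with ε hε
    exact ⟨hz₀, by simpa [dist_eq_norm] using hε⟩
  filter_upwards [eventually_lt_of_lt_liminf hδ', hstart, self_mem_nhdsWithin] with ε hlog hz₀ε hε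
  have hpos : P z₀ {ω | scaledPath ε ω T ∈ ball q δ} ≠ 0 := by
    intro h0
    have hinf : ⨅ z ∈ nearScaled E ε 0 δ'.1, P z {ω | scaledPath ε ω T ∈ ball q δ} = 0 :=
      nonpos_iff_eq_zero.1 ((iInf₂_le z₀ hz₀ε).trans h0.le)
    rw [scaledLogInfProb, hinf, ENNReal.log_zero, EReal.coe_mul_bot_of_pos hε] at hlog
    exact hlog.false
  obtain ⟨ω, hωq, hωE⟩ :=
    Measure.exists_mem_of_measure_ne_zero_of_ae hpos (ae_restrict_of_ae (hstays z₀ hz₀))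
  exact ⟨ω (T / ε), hωE _ (div_nonneg hT (le_of_lt hε)), by
    simpa [scaledPath, dist_eq_norm] using hωq⟩

lemma WeakLDP.unique {E : Set (Sp d)} {P : Sp d → Measure (Path d)} {T : ℝ}
    {J J' : Sp d → Sp d → ℝ} (hJ : WeakLDP E P T J) (hJ' : WeakLDP E P T J')
    (hne : ∀ q : Sp d, ∀ δ : ℝ, 0 < δ → ∀ᶠ ε in 𝓝[>] (0 : ℝ), (nearScaled E ε q δ).Nonempty) :
    J = J' :=
  funext₂ fun q q' => le_antisymm
    (le_of_ldpUpperCompact_of_ldpLower hJ.1 hJ.2.2.2 hJ'.2.2.1 (hne q) q')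
    (le_of_ldpUpperCompact_of_ldpLower hJ'.1 hJ'.2.2.2 hJ.2.2.1 (hne q) q')

/-- If `Z^ε(T)` satisfies the weak LDP with rate functions `I_T`,
then the quasipotential satisfies `I(q,q') = inf_{T>0} T · I_1(q/T, q'/T)`. -/
theorem quasipot_repr
    {d : ℕ} (M : MarkovSetup d) (I : ℝ → Sp d → Sp d → ℝ)
    (h : ∀ T : ℝ, 0 < T → WeakLDP M.E M.P T (I T)) :
    ∀ q q' : Sp d, quasipot I q q' =
      ⨅ T : {T : ℝ // 0 < T}, T.1 * I 1 (T.1⁻¹ • q) (T.1⁻¹ • q') := by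
  intro q q'
  have hne := eventually_nearScaled_nonempty zero_le_one
    (Bornology.nonempty_of_not_isBounded M.unbounded) M.stays (h 1 one_pos).2.2.1
  refine iInf_congr fun T => ?_
  rw [(h T T.2).unique ((h 1 one_pos).rescale T.2) hne]

end GreenLDP
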